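/- Let d be a positive definite diagonal real n×n matrix and b a positive semidefinite real symmetric n×n matrix. Then the matrix A₁ := [d^{1/2}(d+2b)d^{1/2}]^{−1/4} · d · [d^{1/2}(d+2b)d^{1/2}]^{−1/4} satisfies A₁ ≤ I, and A₂ := [(d+2b)^{1/2} d (d+2b)^{1/2}]^{−1/4} · (d+2b) · [(d+2b)^{1/2} d (d+2b)^{1/2}]^{−1/4} satisfies A₂ ≥ I. -/

import Mathlib

open Matrix

namespace Matrix.PosSemidef

/-- The square root of a positive semidefinite matrix, as defined in the older Mathlib
(removed since then in favour of `CFC.sqrt`). -/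
noncomputable def sqrt {n : Type*} [Fintype n] [DecidableEq n]
    {A : Matrix n n ℝ} (hA : A.PosSemidef) : Matrix n n ℝ :=
  hA.1.eigenvectorUnitary.1 * diagonal ((√·) ∘ hA.1.eigenvalues) *
    (star hA.1.eigenvectorUnitary : Matrix n n ℝ)

theorem posSemidef_sqrt {n : Type*} [Fintype n] [DecidableEq n]
    {A : Matrix n n ℝ} (hA : A.PosSemidef) : PosSemidef hA.sqrt := by
  unfold sqrt
  have h : (diagonal ((√·) ∘ hA.1.eigenvalues) : Matrix n n ℝ).PosSemidef := by
    rw [posSemidef_diagonal_iff]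
    intro i
    simp [Real.sqrt_nonneg]
  exact h.mul_mul_conjTranspose_same (hA.1.eigenvectorUnitary : Matrix n n ℝ)

end Matrix.PosSemidef

/-!
With `s = d^{1/2}` and `M₁ = s (d + 2b) s`, congruence by `s` gives `d² = s d s ≤ M₁`, hence
`d ≤ M₁^{1/2}` by operator monotonicity of the square root, and conjugating by `M₁^{-1/4}` turns
this into `A₁ ≤ M₁^{-1/4} M₁^{1/2} M₁^{-1/4} = 1`. Symmetrically, with `t = (d + 2b)^{1/2}` and
`M₂ = t d t`, we get `M₂ ≤ t (d + 2b) t = (d + 2b)²`, hence `M₂^{1/2} ≤ d + 2b`, and conjugating by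
`M₂^{-1/4}` gives `1 ≤ A₂`.
-/

open scoped MatrixOrder ComplexOrder

namespace Matrix

variable {n 𝕜 : Type*} [Fintype n] [RCLike 𝕜]

theorem le_of_mul_self_le_mul_self {P Q : Matrix n n 𝕜} (hP : P.IsHermitian)
    (hQ : Q.IsHermitian) (hPQ : (P + Q).PosDef) (h : P * P ≤ Q * Q) : P ≤ Q := by
  classical
  -- Test `Q² - P² = Q (Q - P) + (Q - P) P` against an eigenvector `v` of `Q - P`.
  have hX : (Q - P).IsHermitian := hQ.sub hP
  rw [le_iff, hX.posSemidef_iff_eigenvalues_nonneg]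
  intro i
  set v := ⇑(hX.eigenvectorBasis i)
  set μ := hX.eigenvalues i
  have hv : v ≠ 0 := fun h0 =>
    hX.eigenvectorBasis.orthonormal.ne_zero i (by ext j; exact congrFun h0 j)
  have hXv : (Q - P) *ᵥ v = (μ : 𝕜) • v := by
    rw [hX.mulVec_eigenvectorBasis, RCLike.real_smul_eq_coe_smul (K := 𝕜)]
  have hvX : star v ᵥ* (Q - P) = (μ : 𝕜) • star v := by
    rw [← hX.eq, ← star_mulVec, hXv, star_smul, RCLike.star_def, RCLike.conj_ofReal]
  have key : star v ⬝ᵥ ((Q * Q - P * P) *ᵥ v) = μ * (star v ⬝ᵥ ((P + Q) *ᵥ v)) := by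
    have : Q * Q - P * P = Q * (Q - P) + (Q - P) * P := by noncomm_ring
    rw [this, add_mulVec, dotProduct_add, ← mulVec_mulVec, ← mulVec_mulVec, hXv,
      dotProduct_mulVec _ (Q - P), hvX, mulVec_smul, dotProduct_smul, smul_dotProduct,
      add_mulVec, dotProduct_add]
    simp only [smul_eq_mul]
    ring
  obtain ⟨r, hr, hr'⟩ := RCLike.pos_iff_exists_ofReal.mp (hPQ.dotProduct_mulVec_pos hv)
  have := (le_iff.mp h).dotProduct_mulVec_nonneg v
  rw [key, ← hr', ← RCLike.ofReal_mul, RCLike.ofReal_nonneg] at this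
  exact nonneg_of_mul_nonneg_left this hr

variable [DecidableEq n] {R X : Matrix n n 𝕜}

theorem inv_mul_mul_inv_le_one (hR : R.IsHermitian) (hu : IsUnit R.det) (h : X ≤ R * R) :
    R⁻¹ * X * R⁻¹ ≤ 1 :=
  calc R⁻¹ * X * R⁻¹
    _ ≤ R⁻¹ * (R * R) * R⁻¹ := hR.inv.isSelfAdjoint.conjugate_le_conjugate h
    _ = 1 := by rw [← mul_assoc, nonsing_inv_mul _ hu, one_mul, mul_nonsing_inv _ hu]

theorem one_le_inv_mul_mul_inv (hR : R.IsHermitian) (hu : IsUnit R.det) (h : R * R ≤ X) :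
    1 ≤ R⁻¹ * X * R⁻¹ :=
  calc 1 = R⁻¹ * (R * R) * R⁻¹ := by
        rw [← mul_assoc, nonsing_inv_mul _ hu, one_mul, mul_nonsing_inv _ hu]
    _ ≤ R⁻¹ * X * R⁻¹ := hR.inv.isSelfAdjoint.conjugate_le_conjugate h

theorem PosDef.conjugate {A C : Matrix n n 𝕜} (hA : A.PosDef) (hC : C.IsHermitian)
    (hu : IsUnit C) : (C * A * C).PosDef := by
  simpa only [hC.star_eq] using (IsUnit.posDef_star_left_conjugate_iff hu).mpr hA

end Matrix

namespace Matrix.PosSemidef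

variable {n : Type*} [Fintype n] [DecidableEq n] {M P Q : Matrix n n ℝ}

theorem sqrt_mul_self (hM : M.PosSemidef) : hM.sqrt * hM.sqrt = M := by
  have hsqrt : hM.sqrt = cfc Real.sqrt M := by rw [hM.1.cfc_eq]; rfl
  rw [hsqrt, ← cfc_mul Real.sqrt Real.sqrt M]
  conv_rhs => rw [← cfc_id ℝ M hM.1.isSelfAdjoint]
  refine cfc_congr fun x hx => Real.mul_self_sqrt ?_
  rw [hM.1.spectrum_real_eq_range_eigenvalues] at hx
  obtain ⟨i, rfl⟩ := hx
  exact hM.eigenvalues_nonneg i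

theorem sqrt_mul_mul_sqrt (hM : M.PosSemidef) : hM.sqrt * M * hM.sqrt = M * M := by
  calc hM.sqrt * M * hM.sqrt = hM.sqrt * (hM.sqrt * hM.sqrt) * hM.sqrt := by
        rw [hM.sqrt_mul_self]
    _ = (hM.sqrt * hM.sqrt) * (hM.sqrt * hM.sqrt) := by noncomm_ring
    _ = M * M := by rw [hM.sqrt_mul_self]

theorem le_sqrt_of_mul_self_le (hM : M.PosSemidef) (hP : P.PosDef) (h : P * P ≤ M) :
    P ≤ hM.sqrt :=
  le_of_mul_self_le_mul_self hP.1 hM.posSemidef_sqrt.1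
    (hP.add_posSemidef hM.posSemidef_sqrt) (by rwa [hM.sqrt_mul_self])

theorem sqrt_le_of_le_mul_self (hM : M.PosSemidef) (hQ : Q.PosDef) (h : M ≤ Q * Q) :
    hM.sqrt ≤ Q :=
  le_of_mul_self_le_mul_self hM.posSemidef_sqrt.1 hQ.1
    (.posSemidef_add hM.posSemidef_sqrt hQ) (by rwa [hM.sqrt_mul_self])

end Matrix.PosSemidef

theorem Matrix.PosDef.posDef_sqrt {n : Type*} [Fintype n] [DecidableEq n] {M : Matrix n n ℝ}
    (hM : M.PosDef) : hM.posSemidef.sqrt.PosDef :=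
  hM.posSemidef.posSemidef_sqrt.posDef_iff_isUnit.mpr
    (isUnit_of_mul_isUnit_left (hM.posSemidef.sqrt_mul_self ▸ hM.isUnit))

theorem loewner_bounds_A1_A2_general {n : ℕ} (d b : Matrix (Fin n) (Fin n) ℝ)
    (hd : d.PosDef) (hb : b.PosSemidef)
    (hdb : (d + 2 • b).PosSemidef)
    (h1 : (hd.posSemidef.sqrt * (d + 2 • b) * hd.posSemidef.sqrt).PosSemidef)
    (h2 : (hdb.sqrt * d * hdb.sqrt).PosSemidef) :
    ((1 : Matrix (Fin n) (Fin n) ℝ)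
        - (h1.posSemidef_sqrt.sqrt)⁻¹ * d * (h1.posSemidef_sqrt.sqrt)⁻¹).PosSemidef ∧
    ((h2.posSemidef_sqrt.sqrt)⁻¹ * (d + 2 • b) * (h2.posSemidef_sqrt.sqrt)⁻¹
        - (1 : Matrix (Fin n) (Fin n) ℝ)).PosSemidef := by
  have hb2 : 0 ≤ 2 • b := nsmul_nonneg hb.nonneg 2
  have hdb' : (d + 2 • b).PosDef := hd.add_posSemidef hb2.posSemidef
  have hs := hd.posDef_sqrt
  have ht := hdb'.posDef_sqrt
  have hM1 : (hd.posSemidef.sqrt * (d + 2 • b) * hd.posSemidef.sqrt).PosDef :=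
    hdb'.conjugate hs.1 hs.isUnit
  have hM2 : (hdb.sqrt * d * hdb.sqrt).PosDef := hd.conjugate ht.1 ht.isUnit
  have hR1 : h1.posSemidef_sqrt.sqrt.PosDef := hM1.posDef_sqrt.posDef_sqrt
  have hR2 : h2.posSemidef_sqrt.sqrt.PosDef := hM2.posDef_sqrt.posDef_sqrt
  have hle1 : d * d ≤ hd.posSemidef.sqrt * (d + 2 • b) * hd.posSemidef.sqrt := by
    rw [← hd.posSemidef.sqrt_mul_mul_sqrt]
    exact hs.1.isSelfAdjoint.conjugate_le_conjugate (le_add_of_nonneg_right hb2)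
  have hle2 : hdb.sqrt * d * hdb.sqrt ≤ (d + 2 • b) * (d + 2 • b) := by
    rw [← hdb.sqrt_mul_mul_sqrt]
    exact ht.1.isSelfAdjoint.conjugate_le_conjugate (le_add_of_nonneg_right hb2)
  constructor
  · refine inv_mul_mul_inv_le_one hR1.1 hR1.det_pos.ne'.isUnit ?_
    rw [h1.posSemidef_sqrt.sqrt_mul_self]
    exact h1.le_sqrt_of_mul_self_le hd hle1
  · refine one_le_inv_mul_mul_inv hR2.1 hR2.det_pos.ne'.isUnit ?_
    rw [h2.posSemidef_sqrt.sqrt_mul_self]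
    exact h2.sqrt_le_of_le_mul_self hdb' hle2

/-- Let `d` be positive definite diagonal and `b ≥ 0` symmetric. Then
`A₁ := [d^{1/2}(d+2b)d^{1/2}]^{−1/4} d [d^{1/2}(d+2b)d^{1/2}]^{−1/4} ≤ I` and
`A₂ := [(d+2b)^{1/2}d(d+2b)^{1/2}]^{−1/4} (d+2b) [(d+2b)^{1/2}d(d+2b)^{1/2}]^{−1/4} ≥ I`
in the Loewner order. -/
theorem loewner_bounds_A1_A2 {n : ℕ} (d b : Matrix (Fin n) (Fin n) ℝ)
    (hd : d.PosDef) (hdiag : d.IsDiag) (hb : b.PosSemidef)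
    (hdb : (d + 2 • b).PosSemidef)
    (h1 : (hd.posSemidef.sqrt * (d + 2 • b) * hd.posSemidef.sqrt).PosSemidef)
    (h2 : (hdb.sqrt * d * hdb.sqrt).PosSemidef) :
    ((1 : Matrix (Fin n) (Fin n) ℝ)
        - (h1.posSemidef_sqrt.sqrt)⁻¹ * d * (h1.posSemidef_sqrt.sqrt)⁻¹).PosSemidef ∧
    ((h2.posSemidef_sqrt.sqrt)⁻¹ * (d + 2 • b) * (h2.posSemidef_sqrt.sqrt)⁻¹
        - (1 : Matrix (Fin n) (Fin n) ℝ)).PosSemidef :=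
  loewner_bounds_A1_A2_general d b hd hb hdb h1 h2
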